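/- arXiv:2105.06675 — 2 statements merged into one kernel-verified Lean document; each statement's English description precedes it below -/
import Mathlib

section
/- Let K := E₁₄ + E₂₅ + E₃₆ ∈ Mat₆(ℂ). For a 6×6 complex matrix g, the following are equivalent: (i) g ∈ Sp(6,ℂ) and g K g⁻¹ = c·K for some nonzero c ∈ ℂ; (ii) there exist 3×3 complex matrices A, B and a nonzero a ∈ ℂ such that g is the block matrix [[A, B],[0, a·A]], with a·Aᵀ A = I₃ and Aᵀ B = Bᵀ A. -/
/-! In `3 × 3` blocks `K = [[0, I], [0, 0]]`, so `g K = c K g` says exactly that the lower-left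
block of `g` vanishes and the upper-left block is `c` times the lower-right one. For a block
upper-triangular `g = [[A, B], [0, D]]` the symplectic condition `gᵀ J g = J` reduces to
`Aᵀ D = I` and the symmetry of `Bᵀ D`; substituting `D = c⁻¹ A` gives (ii). -/

open scoped Matrix

noncomputable section

/-- The `6 × 6` matrix assembled from the `3 × 3` blocks `[[S, R], [T, U]]`. -/
def toM (S R T U : Matrix (Fin 3) (Fin 3) ℂ) : Matrix (Fin 6) (Fin 6) ℂ :=
  Matrix.reindex finSumFinEquiv finSumFinEquiv (Matrix.fromBlocks S R T U)

/-- The matrix `J = [[0, I₃], [-I₃, 0]]` of the standard symplectic form on `ℂ⁶`. -/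
def J : Matrix (Fin 6) (Fin 6) ℂ := toM 0 1 (-1) 0

/-- The symplectic Lie algebra `sp(6, ℂ) = {X : Xᵀ J + J X = 0}` as a complex
subspace of `Mat₆(ℂ)`. -/
def sp6 : Submodule ℂ (Matrix (Fin 6) (Fin 6) ℂ) where
  carrier := {X | Xᵀ * J + J * X = 0}
  zero_mem' := by simp
  add_mem' := by
    intro a b ha hb
    simp only [Set.mem_setOf_eq] at *
    rw [Matrix.transpose_add, Matrix.add_mul, Matrix.mul_add]
    calc aᵀ * J + bᵀ * J + (J * a + J * b) = (aᵀ * J + J * a) + (bᵀ * J + J * b) := by abel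
    _ = 0 := by rw [ha, hb, add_zero]
  smul_mem' := by
    intro c a ha
    simp only [Set.mem_setOf_eq] at *
    rw [Matrix.transpose_smul, Matrix.smul_mul, Matrix.mul_smul, ← smul_add, ha, smul_zero]

/-- The centralizer `{Z : Z H = H Z}` of a matrix `H`, as a complex subspace of
`Mat₆(ℂ)`. -/
def centr (H : Matrix (Fin 6) (Fin 6) ℂ) : Submodule ℂ (Matrix (Fin 6) (Fin 6) ℂ) where
  carrier := {Z | Z * H = H * Z}
  zero_mem' := by simp
  add_mem' := by
    intro a b ha hb
    simp only [Set.mem_setOf_eq] at *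
    rw [Matrix.add_mul, Matrix.mul_add, ha, hb]
  smul_mem' := by
    intro c a ha
    simp only [Set.mem_setOf_eq] at *
    rw [Matrix.smul_mul, Matrix.mul_smul, ha]

/-- The nilpotent matrix `K = E₁₄ + E₂₅ + E₃₆` (indices `1`-based). -/
def K : Matrix (Fin 6) (Fin 6) ℂ :=
  Matrix.single 0 3 1 + Matrix.single 1 4 1 + Matrix.single 2 5 1

lemma toM_mul (S R T U S' R' T' U' : Matrix (Fin 3) (Fin 3) ℂ) :
    toM S R T U * toM S' R' T' U' =
      toM (S * S' + R * T') (S * R' + R * U') (T * S' + U * T') (T * R' + U * U') := by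
  simp only [toM, Matrix.reindex_apply, Matrix.submatrix_mul_equiv, Matrix.fromBlocks_multiply]

lemma toM_transpose (S R T U : Matrix (Fin 3) (Fin 3) ℂ) :
    (toM S R T U)ᵀ = toM Sᵀ Tᵀ Rᵀ Uᵀ := by
  simp only [toM, Matrix.reindex_apply, Matrix.transpose_submatrix, Matrix.fromBlocks_transpose]

lemma smul_toM (c : ℂ) (S R T U : Matrix (Fin 3) (Fin 3) ℂ) :
    c • toM S R T U = toM (c • S) (c • R) (c • T) (c • U) := by
  simp only [toM, Matrix.reindex_apply, ← Matrix.fromBlocks_smul]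
  rfl

lemma neg_toM (S R T U : Matrix (Fin 3) (Fin 3) ℂ) :
    -toM S R T U = toM (-S) (-R) (-T) (-U) := by
  simp only [toM, Matrix.reindex_apply, ← Matrix.fromBlocks_neg]
  rfl

lemma toM_one : toM 1 0 0 1 = 1 := by
  simp only [toM, Matrix.fromBlocks_one, Matrix.reindex_apply, Matrix.submatrix_one_equiv]

lemma toM_inj {S R T U S' R' T' U' : Matrix (Fin 3) (Fin 3) ℂ} :
    toM S R T U = toM S' R' T' U' ↔ S = S' ∧ R = R' ∧ T = T' ∧ U = U' := by
  rw [toM, toM, (Matrix.reindex _ _).injective.eq_iff, Matrix.fromBlocks_inj]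

lemma exists_eq_toM (g : Matrix (Fin 6) (Fin 6) ℂ) : ∃ S R T U, g = toM S R T U := by
  obtain ⟨g', rfl⟩ := (Matrix.reindex (finSumFinEquiv (m := 3) (n := 3))
    (finSumFinEquiv (m := 3) (n := 3))).surjective g
  exact ⟨g'.toBlocks₁₁, g'.toBlocks₁₂, g'.toBlocks₂₁, g'.toBlocks₂₂, by
    rw [toM, Matrix.fromBlocks_toBlocks]⟩

lemma K_eq_toM : K = toM 0 1 0 0 := by
  ext i j
  fin_cases i <;> fin_cases j <;> simp [K, toM, finSumFinEquiv, Fin.addCases]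

lemma J_mul_J : J * J = -1 := by
  rw [J, toM_mul, ← toM_one, neg_toM]
  simp

lemma isUnit_det_J : IsUnit J.det :=
  Matrix.isUnit_det_of_right_inverse (B := -J) (by rw [Matrix.mul_neg, J_mul_J, neg_neg])

lemma Matrix.isUnit_det_of_transpose_mul_mul_self {n R : Type*} [Fintype n] [DecidableEq n]
    [CommRing R] {M g : Matrix n n R} (hM : IsUnit M.det) (h : gᵀ * M * g = M) :
    IsUnit g.det := by
  rw [← h, Matrix.det_mul] at hM
  exact isUnit_of_mul_isUnit_right hM

lemma mul_K_mul_inv_eq_smul_K_iff {g : Matrix (Fin 6) (Fin 6) ℂ} (hg : gᵀ * J * g = J)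
    (c : ℂ) : g * K * g⁻¹ = c • K ↔ g * K = c • K * g :=
  have := g.invertibleOfIsUnitDet (Matrix.isUnit_det_of_transpose_mul_mul_self isUnit_det_J hg)
  Matrix.mul_inv_eq_iff_eq_mul_of_invertible g _ _

lemma toM_mul_K_eq_smul_K_mul_toM_iff (c : ℂ) (S R T U : Matrix (Fin 3) (Fin 3) ℂ) :
    toM S R T U * K = c • K * toM S R T U ↔ T = 0 ∧ S = c • U := by
  rw [K_eq_toM, Matrix.smul_mul, toM_mul, toM_mul, smul_toM, toM_inj]
  simp only [Matrix.mul_zero, Matrix.zero_mul, Matrix.mul_one, Matrix.one_mul, add_zero,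
    zero_add, smul_zero, true_and]
  exact ⟨fun ⟨_, hS, hT⟩ => ⟨hT, hS⟩,
    fun ⟨hT, hS⟩ => ⟨by rw [hT, smul_zero], hS, hT⟩⟩

lemma toM_upper_symplectic_iff (S R U : Matrix (Fin 3) (Fin 3) ℂ) :
    (toM S R 0 U)ᵀ * J * toM S R 0 U = J ↔ Sᵀ * U = 1 ∧ Rᵀ * U = Uᵀ * R := by
  rw [J, toM_transpose, toM_mul, toM_mul, toM_inj]
  simp only [Matrix.mul_zero, Matrix.zero_mul, Matrix.transpose_zero, Matrix.mul_neg,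
    Matrix.neg_mul, Matrix.mul_one, add_zero, zero_add, neg_zero, neg_inj,
    neg_add_eq_zero, true_and]
  constructor
  · rintro ⟨hSU, -, hRU⟩
    exact ⟨hSU, hRU.symm⟩
  · rintro ⟨hSU, hRU⟩
    exact ⟨hSU, by simpa using congrArg Matrix.transpose hSU, hRU.symm⟩

lemma toM_upper_smul_symplectic_iff {a : ℂ} (ha : a ≠ 0) (S R : Matrix (Fin 3) (Fin 3) ℂ) :
    (toM S R 0 (a • S))ᵀ * J * toM S R 0 (a • S) = J ↔
      a • (Sᵀ * S) = 1 ∧ Sᵀ * R = Rᵀ * S := by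
  rw [toM_upper_symplectic_iff, Matrix.mul_smul, Matrix.transpose_smul, Matrix.mul_smul,
    Matrix.smul_mul, smul_right_inj ha, eq_comm (a := Rᵀ * S)]

/-- For a `6 × 6` complex matrix `g`, the following are equivalent:
(i) `g ∈ Sp(6, ℂ)` and `g K g⁻¹ = c • K` for some nonzero `c ∈ ℂ`;
(ii) `g = [[A, B], [0, a • A]]` in blocks, for some `3 × 3` matrices `A, B` and some
nonzero `a ∈ ℂ` with `a • (Aᵀ A) = I₃` and `Aᵀ B = Bᵀ A`. -/
theorem statement_10 (g : Matrix (Fin 6) (Fin 6) ℂ) :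
    (gᵀ * J * g = J ∧ ∃ c : ℂ, c ≠ 0 ∧ g * K * g⁻¹ = c • K) ↔
    (∃ (A B : Matrix (Fin 3) (Fin 3) ℂ) (a : ℂ), a ≠ 0 ∧
      g = toM A B 0 (a • A) ∧ a • (Aᵀ * A) = 1 ∧ Aᵀ * B = Bᵀ * A) := by
  constructor
  · rintro ⟨hsymp, c, hc, hconj⟩
    obtain ⟨S, R, T, U, rfl⟩ := exists_eq_toM g
    rw [mul_K_mul_inv_eq_smul_K_iff hsymp, toM_mul_K_eq_smul_K_mul_toM_iff] at hconj
    obtain ⟨rfl, hS⟩ := hconj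
    obtain rfl : U = c⁻¹ • S := by rw [hS, inv_smul_smul₀ hc]
    have hc' := inv_ne_zero hc
    exact ⟨S, R, c⁻¹, hc', rfl, (toM_upper_smul_symplectic_iff hc' S R).1 hsymp⟩
  · rintro ⟨A, B, a, ha, rfl, hAB⟩
    have hsymp := (toM_upper_smul_symplectic_iff ha A B).2 hAB
    refine ⟨hsymp, a⁻¹, inv_ne_zero ha, ?_⟩
    rw [mul_K_mul_inv_eq_smul_K_iff hsymp, toM_mul_K_eq_smul_K_mul_toM_iff]
    exact ⟨rfl, (inv_smul_smul₀ ha A).symm⟩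
end
end

section
/- Let K' := diag(1, 1, 1, −1, −1, −1). For g ∈ Sp(6,ℂ), there exists c ∈ ℂ with g K' g⁻¹ = c·K' if and only if either g is block diagonal, g = [[A, 0],[0, D]] with Aᵀ D = I₃ (in which case c = 1), or g is block antidiagonal, g = [[0, B],[C, 0]] with Bᵀ C = −I₃ (in which case c = −1). -/
open scoped Matrix

noncomputable section

/-- The matrix `K' = diag(1, 1, 1, -1, -1, -1)`. -/
def K' : Matrix (Fin 6) (Fin 6) ℂ :=
  Matrix.diagonal ![1, 1, 1, -1, -1, -1]

/-! Write `g` in `3 × 3` blocks `[[A, B], [C, D]]`. Since `K' = [[1, 0], [0, -1]]`, the relation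
`g K' = c K' g` says `(1 - c) A = (1 + c) B = (1 + c) C = (1 - c) D = 0`. A symplectic matrix is
invertible, so its blocks are not all zero; this forces `c = ±1`, and kills the off-diagonal
blocks when `c = 1` and the diagonal ones when `c = -1`. The block form `Aᵀ D - Cᵀ B = 1` of the
symplectic relation then gives `Aᵀ D = 1`, respectively (after transposing) `Bᵀ C = -1`. -/

open Matrix hiding J
open LieAlgebra.Orthogonal

section SmulSelf

variable {K V : Type*} [DivisionRing K] [AddCommGroup V] [Module K V] {a : K} {x : V}

theorem eq_smul_self_iff : x = a • x ↔ a = 1 ∨ x = 0 := by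
  rw [← sub_eq_zero (a := a), ← smul_eq_zero, sub_smul, one_smul, sub_eq_zero, eq_comm]

theorem neg_eq_smul_self_iff : -x = a • x ↔ a = -1 ∨ x = 0 := by
  rw [← add_eq_zero_iff_eq_neg (a := a), ← smul_eq_zero, add_smul, one_smul,
    add_eq_zero_iff_eq_neg, eq_comm]

end SmulSelf

section IndefiniteDiagonal

variable {K m n : Type*} [Field K] [DecidableEq m] [DecidableEq n]

theorem indefiniteDiagonal_eq_fromBlocks :
    indefiniteDiagonal m n K = fromBlocks 1 0 0 (-1) := by
  rw [indefiniteDiagonal, ← fromBlocks_diagonal, ← diagonal_neg]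
  rfl

theorem fromBlocks_mul_indefiniteDiagonal_eq_smul_iff [NeZero (2 : K)] [Fintype m] [Fintype n]
    {A : Matrix m m K} {B : Matrix m n K} {C : Matrix n m K} {D : Matrix n n K}
    (hM : fromBlocks A B C D ≠ 0) (c : K) :
    fromBlocks A B C D * indefiniteDiagonal m n K =
        c • indefiniteDiagonal m n K * fromBlocks A B C D ↔
      c = 1 ∧ B = 0 ∧ C = 0 ∨ c = -1 ∧ A = 0 ∧ D = 0 := by
  have hblocks : fromBlocks A B C D * indefiniteDiagonal m n K =
        c • indefiniteDiagonal m n K * fromBlocks A B C D ↔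
      (c = 1 ∨ A = 0) ∧ (c = -1 ∨ B = 0) ∧ (c = -1 ∨ C = 0) ∧ (c = 1 ∨ D = 0) := by
    simp only [indefiniteDiagonal_eq_fromBlocks, fromBlocks_smul, fromBlocks_multiply,
      fromBlocks_inj, Matrix.mul_one, Matrix.mul_zero, Matrix.mul_neg, Matrix.smul_mul,
      Matrix.one_mul, Matrix.zero_mul, Matrix.neg_mul, add_zero, zero_add, smul_zero, smul_neg]
    rw [← neg_smul, neg_inj, eq_smul_self_iff, neg_eq_smul_self_iff, eq_smul_self_iff,
      eq_smul_self_iff, neg_eq_iff_eq_neg]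
  have hne : (1 : K) ≠ -1 := by
    rw [ne_eq, eq_neg_iff_add_eq_zero, one_add_one_eq_two]
    exact two_ne_zero
  rw [hblocks]
  constructor
  · rintro ⟨hA, hB, hC, hD⟩
    by_cases h1 : c = 1
    · subst h1
      exact .inl ⟨rfl, hB.resolve_left hne, hC.resolve_left hne⟩
    by_cases h2 : c = -1
    · subst h2
      exact .inr ⟨rfl, hA.resolve_left hne.symm, hD.resolve_left hne.symm⟩
    refine absurd ?_ hM
    rw [hA.resolve_left h1, hB.resolve_left h2, hC.resolve_left h2, hD.resolve_left h1,
      fromBlocks_zero]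
  · rintro (⟨rfl, rfl, rfl⟩ | ⟨rfl, rfl, rfl⟩) <;> simp

theorem SymplecticGroup.mul_indefiniteDiagonal_mul_inv_eq_smul_iff [NeZero (2 : K)] [Fintype m]
    [Nonempty m] {M : Matrix (m ⊕ m) (m ⊕ m) K} (hM : M ∈ symplecticGroup m K) (c : K) :
    M * indefiniteDiagonal m m K * M⁻¹ = c • indefiniteDiagonal m m K ↔
      c = 1 ∧ (∃ A D, M = fromBlocks A 0 0 D ∧ Aᵀ * D = 1) ∨
        c = -1 ∧ (∃ B C, M = fromBlocks 0 B C 0 ∧ Bᵀ * C = -1) := by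
  have hdet := SymplecticGroup.symplectic_det hM
  let := M.invertibleOfIsUnitDet hdet
  have hM0 : M ≠ 0 := ((isUnit_iff_isUnit_det M).2 hdet).ne_zero
  rw [mul_inv_eq_iff_eq_mul_of_invertible]
  obtain ⟨A, B, C, D, rfl⟩ : ∃ A B C D, M = fromBlocks A B C D :=
    ⟨_, _, _, _, (fromBlocks_toBlocks M).symm⟩
  rw [fromBlocks_mul_indefiniteDiagonal_eq_smul_iff hM0]
  obtain ⟨-, -, hsymp⟩ := SymplecticGroup.fromBlocks_mem_iff.1 hM
  constructor
  · rintro (⟨rfl, rfl, rfl⟩ | ⟨rfl, rfl, rfl⟩)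
    · exact .inl ⟨rfl, A, D, rfl, by simpa using hsymp⟩
    · refine .inr ⟨rfl, B, C, rfl, ?_⟩
      simpa [← neg_eq_iff_eq_neg] using congr(($hsymp)ᵀ)
  · rintro (⟨rfl, A', D', hM', -⟩ | ⟨rfl, B', C', hM', -⟩) <;>
      obtain ⟨rfl, rfl, rfl, rfl⟩ := fromBlocks_inj.1 hM' <;> simp

end IndefiniteDiagonal

local notation "φ" => reindexAlgEquiv ℂ ℂ (finSumFinEquiv : Fin 3 ⊕ Fin 3 ≃ Fin 6)

theorem toM_eq_reindexAlgEquiv (A B C D : Matrix (Fin 3) (Fin 3) ℂ) :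
    toM A B C D = φ (fromBlocks A B C D) :=
  rfl

theorem J_eq_reindexAlgEquiv : J = φ (-Matrix.J (Fin 3) ℂ) := by
  simp [J, toM, Matrix.J, fromBlocks_neg]

theorem K'_eq_reindexAlgEquiv : K' = φ (indefiniteDiagonal (Fin 3) (Fin 3) ℂ) := by
  ext i j
  fin_cases i <;> fin_cases j <;> rfl

theorem transpose_mul_J_mul_eq_J_iff (M : Matrix (Fin 3 ⊕ Fin 3) (Fin 3 ⊕ Fin 3) ℂ) :
    (φ M)ᵀ * J * φ M = J ↔ M ∈ symplecticGroup (Fin 3) ℂ := by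
  have htr : (φ M)ᵀ = φ Mᵀ := transpose_reindex _ _ M
  rw [SymplecticGroup.mem_iff', J_eq_reindexAlgEquiv, htr, ← map_mul, ← map_mul,
    (φ).injective.eq_iff, Matrix.mul_neg, Matrix.neg_mul, neg_inj]

theorem mul_K'_mul_inv_eq_smul_iff {M : Matrix (Fin 3 ⊕ Fin 3) (Fin 3 ⊕ Fin 3) ℂ}
    (hM : M ∈ symplecticGroup (Fin 3) ℂ) (c : ℂ) :
    φ M * K' * (φ M)⁻¹ = c • K' ↔
      c = 1 ∧ (∃ A D, φ M = toM A 0 0 D ∧ Aᵀ * D = 1) ∨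
        c = -1 ∧ (∃ B C, φ M = toM 0 B C 0 ∧ Bᵀ * C = -1) := by
  have hinv : (φ M)⁻¹ = φ M⁻¹ := inv_reindex _ _ M
  simp only [K'_eq_reindexAlgEquiv, hinv, toM_eq_reindexAlgEquiv, ← map_mul, ← map_smul,
    (φ).injective.eq_iff]
  exact SymplecticGroup.mul_indefiniteDiagonal_mul_inv_eq_smul_iff hM c

/-- For `g ∈ Sp(6, ℂ)`, there exists `c ∈ ℂ` with `g K' g⁻¹ = c • K'` if and only if
either `g = [[A, 0], [0, D]]` in blocks with `Aᵀ D = I₃` (in which case `c = 1`), or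
`g = [[0, B], [C, 0]]` in blocks with `Bᵀ C = -I₃` (in which case `c = -1`). -/
theorem statement_11 (g : Matrix (Fin 6) (Fin 6) ℂ) (hg : gᵀ * J * g = J) :
    (∃ c : ℂ, g * K' * g⁻¹ = c • K') ↔
    ((∃ A D : Matrix (Fin 3) (Fin 3) ℂ, g = toM A 0 0 D ∧ Aᵀ * D = 1) ∧
        g * K' * g⁻¹ = (1 : ℂ) • K') ∨
    ((∃ B C : Matrix (Fin 3) (Fin 3) ℂ, g = toM 0 B C 0 ∧ Bᵀ * C = -1) ∧
        g * K' * g⁻¹ = (-1 : ℂ) • K') := by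
  obtain ⟨M, rfl⟩ := (φ).surjective g
  have hM := (transpose_mul_J_mul_eq_J_iff M).1 hg
  constructor
  · rintro ⟨c, hc⟩
    rcases (mul_K'_mul_inv_eq_smul_iff hM c).1 hc with ⟨rfl, h⟩ | ⟨rfl, h⟩
    exacts [.inl ⟨h, hc⟩, .inr ⟨h, hc⟩]
  · rintro (⟨-, h⟩ | ⟨-, h⟩)
    exacts [⟨1, h⟩, ⟨-1, h⟩]
end
end
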